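/- arXiv:2409.14694 — 6 statements merged into one kernel-verified Lean document; each statement's English description precedes it below -/
import Mathlib

section
/- Let G be a finite simple graph with vertex set V, let u ∈ V have exactly two neighbours v_1 and v_2, and suppose V ∖ {u} is partitioned into sets V_1 ∋ v_1 and V_2 ∋ v_2 with no edge of G joining a vertex of V_1 to a vertex of V_2. Let G_2 be the subgraph of G induced on V_2 and let N be the set of neighbours of v_2 in G_2. Then the X measurement X_u(G), taken with chosen neighbour v_2, is the graph on vertex set V ∖ {u} whose edges are exactly: all edges of G between vertices of V_1; an edge from v_1 to v_2 and from v_1 to every vertex of N; and all edges of G between vertices of V_2 except the edges joining v_2 to the vertices of N. -/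
/-- A finite simple graph with an explicit vertex set inside an ambient type `α`. -/
structure FGraph (α : Type*) where
  verts : Set α
  Adj : α → α → Prop
  symm : ∀ {a b}, Adj a b → Adj b a
  loopless : ∀ a, ¬ Adj a a
  edge_mem : ∀ {a b}, Adj a b → a ∈ verts ∧ b ∈ verts

namespace FGraph

variable {α : Type*}

/-- Local complementation at `v`: two distinct vertices are adjacent iff exactly one of
(adjacent in `G`) or (both neighbours of `v` in `G`) holds. -/
def LC (G : FGraph α) (v : α) : FGraph α where
  verts := G.verts
  Adj a b := a ≠ b ∧ Xor' (G.Adj a b) (G.Adj v a ∧ G.Adj v b)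
  symm := by
    rintro a b ⟨hne, h⟩
    refine ⟨hne.symm, ?_⟩
    rcases h with ⟨h1, h2⟩ | ⟨h1, h2⟩
    · exact Or.inl ⟨G.symm h1, fun hx => h2 ⟨hx.2, hx.1⟩⟩
    · exact Or.inr ⟨⟨h1.2, h1.1⟩, fun hx => h2 (G.symm hx)⟩
  loopless := fun a h => h.1 rfl
  edge_mem := by
    rintro a b ⟨hne, h⟩
    rcases h with ⟨h1, _⟩ | ⟨⟨ha, hb⟩, _⟩
    · exact G.edge_mem h1
    · exact ⟨(G.edge_mem ha).2, (G.edge_mem hb).2⟩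

/-- Z measurement at `v`: delete the vertex `v` together with all incident edges. -/
def ZM (G : FGraph α) (v : α) : FGraph α where
  verts := G.verts \ {v}
  Adj a b := G.Adj a b ∧ a ≠ v ∧ b ≠ v
  symm := fun h => ⟨G.symm h.1, h.2.2, h.2.1⟩
  loopless := fun a h => G.loopless a h.1
  edge_mem := by
    rintro a b ⟨h, ha, hb⟩
    exact ⟨⟨(G.edge_mem h).1, ha⟩, ⟨(G.edge_mem h).2, hb⟩⟩

/-- X measurement at `u` with chosen neighbour `w`:
`X_u(G) = LC_w(Z_u(LC_u(LC_w(G))))`. -/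
def XM (G : FGraph α) (u w : α) : FGraph α :=
  ((((G.LC w).LC u).ZM u).LC w)

/-- Y measurement at `v`: `Y_v(G) = Z_v(LC_v(G))`. -/
def YM (G : FGraph α) (v : α) : FGraph α :=
  (G.LC v).ZM v

/-- `G` is a star graph with centre `c`. -/
def IsStar (G : FGraph α) (c : α) : Prop :=
  c ∈ G.verts ∧
    ∀ a b, G.Adj a b ↔ (a ≠ b ∧ a ∈ G.verts ∧ b ∈ G.verts ∧ (a = c ∨ b = c))

/-- `G` is a complete graph on its vertex set. -/
def IsComplete (G : FGraph α) : Prop :=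
  ∀ a b, G.Adj a b ↔ (a ≠ b ∧ a ∈ G.verts ∧ b ∈ G.verts)

/-- One step of local complementation or vertex deletion. -/
inductive Step : FGraph α → FGraph α → Prop
  | lc (G : FGraph α) (v : α) : Step G (G.LC v)
  | del (G : FGraph α) (v : α) : Step G (G.ZM v)

/-- `H` is a vertex-minor of `G`: `H` is obtained from `G` by a finite sequence of
local complementations and vertex deletions. -/
def IsVertexMinor (H G : FGraph α) : Prop :=
  Relation.ReflTransGen Step G H

/-- One step of local complementation. -/
inductive LCStep : FGraph α → FGraph α → Prop
  | lc (G : FGraph α) (v : α) : LCStep G (G.LC v)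

/-- `H` is obtained from `G` by a finite sequence of local complementations. -/
def LCReach (G H : FGraph α) : Prop :=
  Relation.ReflTransGen LCStep G H

end FGraph

/-!
Local complementation at `v₂` toggles the pairs inside `N(v₂) = {u} ∪ N`, after which `u` is
adjacent to `v₁`, `v₂` and all of `N`. Local complementation at `u` then toggles the pairs inside
`{v₁, v₂} ∪ N`. Once `u` is deleted the two toggles cancel inside `N`, and the net effect is to
toggle the pairs joining `v₁` to `{v₂} ∪ N` (non-edges of `G`, which appear) and `v₂` to `N`
(edges of `G`, which disappear). Now `v₂` has the single neighbour `v₁`, so the final local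
complementation at `v₂` changes nothing.
-/

namespace FGraph

variable {α : Type*} (G : FGraph α)

@[simp] theorem LC_adj {v a b : α} :
    (G.LC v).Adj a b ↔ a ≠ b ∧ Xor (G.Adj a b) (G.Adj v a ∧ G.Adj v b) := Iff.rfl

@[simp] theorem ZM_adj {v a b : α} : (G.ZM v).Adj a b ↔ G.Adj a b ∧ a ≠ v ∧ b ≠ v := Iff.rfl

theorem ne_of_adj {a b : α} (h : G.Adj a b) : a ≠ b := fun hab => G.loopless b (hab ▸ h)

theorem LC_adj_of_subsingleton_nbhd {v : α} (hv : ∀ x y, G.Adj v x → G.Adj v y → x = y)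
    (a b : α) : (G.LC v).Adj a b ↔ G.Adj a b := by
  refine ⟨?_, fun hab =>
    ⟨G.ne_of_adj hab, Or.inl ⟨hab, fun h => G.ne_of_adj hab (hv _ _ h.1 h.2)⟩⟩⟩
  rintro ⟨hne, ⟨hab, -⟩ | ⟨⟨ha, hb⟩, -⟩⟩
  · exact hab
  · exact absurd (hv _ _ ha hb) hne

/-- After `LC_w` the neighbourhood of `u` is `N(u) Δ N(w)`, the set that `LC_u` complements. -/
theorem ZM_LC_LC_adj {u w : α} (hwu : G.Adj w u) (a b : α) :
    (((G.LC w).LC u).ZM u).Adj a b ↔ a ≠ u ∧ b ≠ u ∧ a ≠ b ∧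
      Xor (Xor (G.Adj a b) (G.Adj w a ∧ G.Adj w b))
        (Xor (G.Adj u a) (G.Adj w a) ∧ Xor (G.Adj u b) (G.Adj w b)) := by
  by_cases ha : a = u
  · simp [ha]
  by_cases hb : b = u
  · simp [hb]
  by_cases hab : a = b
  · simp [hab]
  simp [hwu, ha, hb, hab, Ne.symm ha, Ne.symm hb]

theorem adj_iff_mem_of_separated {u w x : α} {V₁ V₂ : Set α} (hpart : V₁ ∪ V₂ = G.verts \ {u})
    (hnoedge : ∀ a ∈ V₁, ∀ b ∈ V₂, ¬ G.Adj a b) (hw : w ∈ V₂) (hxu : x ≠ u) :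
    G.Adj w x ↔ x ∈ {y ∈ V₂ | G.Adj w y} := by
  refine ⟨fun hwx => ⟨?_, hwx⟩, And.right⟩
  have hx : x ∈ V₁ ∪ V₂ := hpart ▸ ⟨(G.edge_mem hwx).2, hxu⟩
  exact hx.resolve_left fun hx₁ => hnoedge x hx₁ w hw (G.symm hwx)

theorem xor_adj_iff_of_nbhd_eq_pair {u v₁ v₂ x : α} (huv₁ : G.Adj u v₁) (huv₂ : G.Adj u v₂)
    (honly : ∀ x, G.Adj u x → x = v₁ ∨ x = v₂) (hv₂v₁ : ¬ G.Adj v₂ v₁) :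
    Xor (G.Adj u x) (G.Adj v₂ x) ↔ x = v₁ ∨ x = v₂ ∨ G.Adj v₂ x := by
  rcases eq_or_ne x v₁ with rfl | h₁
  · simp [huv₁, hv₂v₁]
  rcases eq_or_ne x v₂ with rfl | h₂
  · simp [huv₂, G.loopless]
  have hux : ¬ G.Adj u x := fun h => (honly x h).elim h₁ h₂
  simp [hux, h₁, h₂]

end FGraph

theorem xMeasurement_merge_general {α : Type*} (G : FGraph α) (u v₁ v₂ : α) (V₁ V₂ : Set α)
    (huv₁ : G.Adj u v₁) (huv₂ : G.Adj u v₂)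
    (honly : ∀ x, G.Adj u x → x = v₁ ∨ x = v₂)
    (hpart : V₁ ∪ V₂ = G.verts \ {u})
    (hdisj : Disjoint V₁ V₂)
    (hv₁ : v₁ ∈ V₁) (hv₂ : v₂ ∈ V₂)
    (hnoedge : ∀ a ∈ V₁, ∀ b ∈ V₂, ¬ G.Adj a b) :
    (G.XM u v₂).verts = G.verts \ {u} ∧
    ∀ a b, (G.XM u v₂).Adj a b ↔
      ((a ∈ V₁ ∧ b ∈ V₁ ∧ G.Adj a b) ∨
       ((a = v₁ ∧ b ∈ insert v₂ {x ∈ V₂ | G.Adj v₂ x}) ∨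
        (b = v₁ ∧ a ∈ insert v₂ {x ∈ V₂ | G.Adj v₂ x})) ∨
       (a ∈ V₂ ∧ b ∈ V₂ ∧ G.Adj a b ∧
         ¬ ((a = v₂ ∧ b ∈ {x ∈ V₂ | G.Adj v₂ x}) ∨
            (b = v₂ ∧ a ∈ {x ∈ V₂ | G.Adj v₂ x})))) := by
  set N := {x ∈ V₂ | G.Adj v₂ x}
  set M := ((G.LC v₂).LC u).ZM u
  have hv₂v₁ : ¬ G.Adj v₂ v₁ := fun h => hnoedge v₁ hv₁ v₂ hv₂ (G.symm h)
  have hM (a b : α) : M.Adj a b ↔ a ≠ u ∧ b ≠ u ∧ a ≠ b ∧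
      Xor (Xor (G.Adj a b) (a ∈ N ∧ b ∈ N))
        ((a = v₁ ∨ a = v₂ ∨ a ∈ N) ∧ (b = v₁ ∨ b = v₂ ∨ b ∈ N)) := by
    rw [G.ZM_LC_LC_adj (G.symm huv₂)]
    refine and_congr_right fun ha => and_congr_right fun hb => and_congr_right fun _ => ?_
    rw [G.xor_adj_iff_of_nbhd_eq_pair huv₁ huv₂ honly hv₂v₁,
      G.xor_adj_iff_of_nbhd_eq_pair huv₁ huv₂ honly hv₂v₁,
      G.adj_iff_mem_of_separated hpart hnoedge hv₂ ha,
      G.adj_iff_mem_of_separated hpart hnoedge hv₂ hb]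
  have hv₂N : v₂ ∉ N := fun h => G.loopless v₂ h.2
  have hM_v₂ (x : α) (hx : M.Adj v₂ x) : x = v₁ := by
    obtain ⟨-, hxu, hv₂x, hx⟩ := (hM v₂ x).1 hx
    rw [G.adj_iff_mem_of_separated hpart hnoedge hv₂ hxu] at hx
    grind
  refine ⟨rfl, fun a b => ?_⟩
  rw [FGraph.XM, FGraph.LC_adj_of_subsingleton_nbhd _
    fun x y hx hy => (hM_v₂ x hx).trans (hM_v₂ y hy).symm, hM]
  have h₁₂ := Set.disjoint_left.mp hdisj
  have hreg (x : α) : x ∈ V₁ ∨ x ∈ V₂ ↔ x ∈ G.verts ∧ x ≠ u := by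
    rw [← Set.mem_union, hpart]; rfl
  grind [FGraph.ne_of_adj, FGraph.symm, FGraph.edge_mem]

/-- the effect of an X measurement at a degree-two vertex `u` with
chosen neighbour `v₂`, where `V \ {u}` is split into `V₁ ∋ v₁` and `V₂ ∋ v₂`
with no edges between the two parts.  Here `{x ∈ V₂ | G.Adj v₂ x}` is the
neighbourhood `N` of `v₂` in the subgraph `G₂` induced on `V₂`. -/
theorem xMeasurement_merge {α : Type*} (G : FGraph α) (u v₁ v₂ : α) (V₁ V₂ : Set α)
    (hu : u ∈ G.verts)
    (huv₁ : G.Adj u v₁) (huv₂ : G.Adj u v₂) (hv₁v₂ : v₁ ≠ v₂)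
    (honly : ∀ x, G.Adj u x → x = v₁ ∨ x = v₂)
    (hpart : V₁ ∪ V₂ = G.verts \ {u})
    (hdisj : Disjoint V₁ V₂)
    (hv₁ : v₁ ∈ V₁) (hv₂ : v₂ ∈ V₂)
    (hnoedge : ∀ a ∈ V₁, ∀ b ∈ V₂, ¬ G.Adj a b) :
    (G.XM u v₂).verts = G.verts \ {u} ∧
    ∀ a b, (G.XM u v₂).Adj a b ↔
      ((a ∈ V₁ ∧ b ∈ V₁ ∧ G.Adj a b) ∨
       ((a = v₁ ∧ b ∈ insert v₂ {x ∈ V₂ | G.Adj v₂ x}) ∨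
        (b = v₁ ∧ a ∈ insert v₂ {x ∈ V₂ | G.Adj v₂ x})) ∨
       (a ∈ V₂ ∧ b ∈ V₂ ∧ G.Adj a b ∧
         ¬ ((a = v₂ ∧ b ∈ {x ∈ V₂ | G.Adj v₂ x}) ∨
            (b = v₂ ∧ a ∈ {x ∈ V₂ | G.Adj v₂ x})))) :=
  xMeasurement_merge_general G u v₁ v₂ V₁ V₂ huv₁ huv₂ honly hpart hdisj hv₁ hv₂ hnoedge
end

section
/- Let G be a finite simple graph with vertex set V, let u ∈ V have exactly two neighbours v_1 and v_2, and suppose V ∖ {u} is partitioned into sets V_1 ∋ v_1 and V_2 ∋ v_2 with no edge of G joining a vertex of V_1 to a vertex of V_2. Suppose moreover that the subgraph of G induced on V_2 is a star graph with centre v_2. Then the X measurement X_u(G), taken with chosen neighbour v_2, is the graph on vertex set V ∖ {u} whose edges are exactly: all edges of G between vertices of V_1, together with an edge from v_1 to every vertex of V_2 (in particular, there are no edges between two vertices of V_2). -/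
/-- X measurement at a degree-two vertex `u` when the induced
subgraph on `V₂` is a star graph with centre `v₂`. -/
theorem xMeasurement_merge_star {α : Type*} (G : FGraph α) (u v₁ v₂ : α) (V₁ V₂ : Set α)
    (hu : u ∈ G.verts)
    (huv₁ : G.Adj u v₁) (huv₂ : G.Adj u v₂) (hv₁v₂ : v₁ ≠ v₂)
    (honly : ∀ x, G.Adj u x → x = v₁ ∨ x = v₂)
    (hpart : V₁ ∪ V₂ = G.verts \ {u})
    (hdisj : Disjoint V₁ V₂)
    (hv₁ : v₁ ∈ V₁) (hv₂ : v₂ ∈ V₂)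
    (hnoedge : ∀ a ∈ V₁, ∀ b ∈ V₂, ¬ G.Adj a b)
    (hstar₂ : ∀ a b, a ∈ V₂ → b ∈ V₂ → (G.Adj a b ↔ (a ≠ b ∧ (a = v₂ ∨ b = v₂)))) :
    (G.XM u v₂).verts = G.verts \ {u} ∧
    ∀ a b, (G.XM u v₂).Adj a b ↔
      ((a ∈ V₁ ∧ b ∈ V₁ ∧ G.Adj a b) ∨
       (a = v₁ ∧ b ∈ V₂) ∨ (b = v₁ ∧ a ∈ V₂)) := by
  classical
  have hAne : ∀ {x y}, G.Adj x y → x ≠ y := fun {x y} h e => G.loopless y (e ▸ h)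
  have hiff : ∀ x, (x ∈ V₁ ∨ x ∈ V₂) ↔ (x ∈ G.verts ∧ x ≠ u) := by
    intro x
    rw [← Set.mem_union, hpart]
    simp [Set.mem_diff]
  have hm₁ : ∀ x ∈ V₁, x ∈ G.verts ∧ x ≠ u := fun x hx => (hiff x).mp (Or.inl hx)
  have hm₂ : ∀ x ∈ V₂, x ∈ G.verts ∧ x ≠ u := fun x hx => (hiff x).mp (Or.inr hx)
  have hsplit : ∀ x, x ∈ G.verts → x ≠ u → x ∈ V₁ ∨ x ∈ V₂ := fun x hx hxu =>
    (hiff x).mpr ⟨hx, hxu⟩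
  have h12 : ∀ x, x ∈ V₁ → x ∈ V₂ → False := fun x h1 h2 =>
    Set.disjoint_left.mp hdisj h1 h2
  have hv₁n2 : v₁ ∉ V₂ := fun h => h12 v₁ hv₁ h
  have hv₂n1 : v₂ ∉ V₁ := fun h => h12 v₂ h hv₂
  have huv₁' : u ≠ v₁ := hAne huv₁
  have huv₂' : u ≠ v₂ := hAne huv₂
  have hGv₂ : ∀ x, x ≠ u → (G.Adj v₂ x ↔ (x ∈ V₂ ∧ x ≠ v₂)) := by
    intro x hxu
    constructor
    · intro h
      have hxv := (G.edge_mem h).2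
      rcases hsplit x hxv hxu with h1 | h2
      · exact absurd (G.symm h) (hnoedge x h1 v₂ hv₂)
      · exact ⟨h2, fun e => G.loopless v₂ (e ▸ h)⟩
    · rintro ⟨h2, hne⟩
      exact (hstar₂ v₂ x hv₂ h2).mpr ⟨Ne.symm hne, Or.inl rfl⟩
  -- adjacency of `u` after the first local complementation at `v₂`
  have hA1u : ∀ x, x ≠ u → ((G.LC v₂).Adj u x ↔ (x = v₁ ∨ x ∈ V₂)) := by
    intro x hxu
    show (u ≠ x ∧ Xor' (G.Adj u x) (G.Adj v₂ u ∧ G.Adj v₂ x)) ↔ _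
    have hv₂u : G.Adj v₂ u := G.symm huv₂
    constructor
    · rintro ⟨-, ⟨h, -⟩ | ⟨⟨-, h⟩, -⟩⟩
      · rcases honly x h with rfl | rfl
        · exact Or.inl rfl
        · exact Or.inr hv₂
      · exact Or.inr ((hGv₂ x hxu).mp h).1
    · rintro (rfl | hx2)
      · refine ⟨Ne.symm hxu, Or.inl ⟨huv₁, ?_⟩⟩
        rintro ⟨-, h⟩
        exact hv₁n2 ((hGv₂ x (Ne.symm huv₁')).mp h).1
      · by_cases hxv : x = v₂
        · subst hxv
          exact ⟨Ne.symm hxu, Or.inl ⟨huv₂, fun h => G.loopless x h.2⟩⟩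
        · refine ⟨Ne.symm hxu, Or.inr ⟨⟨hv₂u, (hGv₂ x hxu).mpr ⟨hx2, hxv⟩⟩, ?_⟩⟩
          intro h
          rcases honly x h with rfl | rfl
          · exact hv₁n2 hx2
          · exact hxv rfl
  -- adjacency inside `V₁` after LC at `v₂`
  have hA1₁₁ : ∀ x y, x ∈ V₁ → y ∈ V₁ → ((G.LC v₂).Adj x y ↔ G.Adj x y) := by
    intro x y hx hy
    have hnx : ¬ G.Adj v₂ x := fun h => h12 x hx ((hGv₂ x (hm₁ x hx).2).mp h).1
    show (x ≠ y ∧ Xor' (G.Adj x y) (G.Adj v₂ x ∧ G.Adj v₂ y)) ↔ _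
    constructor
    · rintro ⟨-, ⟨h, -⟩ | ⟨⟨h, -⟩, -⟩⟩
      · exact h
      · exact absurd h hnx
    · intro h
      exact ⟨hAne h, Or.inl ⟨h, fun h' => hnx h'.1⟩⟩
  -- no V₁-V₂ edges after LC at `v₂`
  have hA1₁₂ : ∀ x y, x ∈ V₁ → y ∈ V₂ → ¬ (G.LC v₂).Adj x y := by
    intro x y hx hy h
    have hnx : ¬ G.Adj v₂ x := fun h => h12 x hx ((hGv₂ x (hm₁ x hx).2).mp h).1
    obtain ⟨-, ⟨h1, -⟩ | ⟨⟨h1, -⟩, -⟩⟩ := h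
    · exact hnoedge x hx y hy h1
    · exact hnx h1
  -- V₂ becomes a complete graph after LC at `v₂`
  have hA1₂₂ : ∀ x y, x ∈ V₂ → y ∈ V₂ → x ≠ y → (G.LC v₂).Adj x y := by
    intro x y hx hy hxy
    refine ⟨hxy, ?_⟩
    by_cases hx2 : x = v₂
    · subst hx2
      refine Or.inl ⟨(hstar₂ x y hx hy).mpr ⟨hxy, Or.inl rfl⟩, ?_⟩
      rintro ⟨h, -⟩
      exact G.loopless x h
    · by_cases hy2 : y = v₂
      · subst hy2
        refine Or.inl ⟨(hstar₂ x y hx hy).mpr ⟨hxy, Or.inr rfl⟩, ?_⟩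
        rintro ⟨-, h⟩
        exact G.loopless y h
      · refine Or.inr ⟨⟨(hGv₂ x (hm₂ x hx).2).mpr ⟨hx, hx2⟩,
          (hGv₂ y (hm₂ y hy).2).mpr ⟨hy, hy2⟩⟩, ?_⟩
        intro h
        rcases ((hstar₂ x y hx hy).mp h).2 with e | e
        · exact hx2 e
        · exact hy2 e
  -- characterisation of the graph after LC v₂, LC u, delete u
  have hA3 : ∀ x y, ((((G.LC v₂).LC u).ZM u)).Adj x y ↔
      ((x ∈ V₁ ∧ y ∈ V₁ ∧ G.Adj x y) ∨ (x = v₁ ∧ y ∈ V₂) ∨ (y = v₁ ∧ x ∈ V₂)) := by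
    intro x y
    show ((x ≠ y ∧ Xor' ((G.LC v₂).Adj x y) ((G.LC v₂).Adj u x ∧ (G.LC v₂).Adj u y))
        ∧ x ≠ u ∧ y ≠ u) ↔ _
    constructor
    · rintro ⟨⟨hxy, ⟨h1, h2⟩ | ⟨⟨ha, hb⟩, h2⟩⟩, hxu, hyu⟩
      · have hxm := ((G.LC v₂).edge_mem h1).1
        have hym := ((G.LC v₂).edge_mem h1).2
        rcases hsplit x hxm hxu with hx1 | hx2
        · rcases hsplit y hym hyu with hy1 | hy2
          · exact Or.inl ⟨hx1, hy1, (hA1₁₁ x y hx1 hy1).mp h1⟩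
          · exact absurd h1 (hA1₁₂ x y hx1 hy2)
        · rcases hsplit y hym hyu with hy1 | hy2
          · exact absurd ((G.LC v₂).symm h1) (hA1₁₂ y x hy1 hx2)
          · exact absurd ⟨(hA1u x hxu).mpr (Or.inr hx2),
              (hA1u y hyu).mpr (Or.inr hy2)⟩ h2
      · rcases (hA1u x hxu).mp ha with rfl | hx2
        · rcases (hA1u y hyu).mp hb with rfl | hy2
          · exact absurd rfl hxy
          · exact Or.inr (Or.inl ⟨rfl, hy2⟩)
        · rcases (hA1u y hyu).mp hb with rfl | hy2
          · exact Or.inr (Or.inr ⟨rfl, hx2⟩)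
          · exact absurd (hA1₂₂ x y hx2 hy2 hxy) h2
    · rintro (⟨hx1, hy1, hxy⟩ | ⟨rfl, hy2⟩ | ⟨rfl, hx2⟩)
      · refine ⟨⟨hAne hxy, Or.inl ⟨(hA1₁₁ x y hx1 hy1).mpr hxy, ?_⟩⟩,
          (hm₁ x hx1).2, (hm₁ y hy1).2⟩
        rintro ⟨ha, hb⟩
        rcases (hA1u x (hm₁ x hx1).2).mp ha with rfl | hx2
        · rcases (hA1u y (hm₁ y hy1).2).mp hb with rfl | hy2
          · exact hAne hxy rfl
          · exact h12 y hy1 hy2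
        · exact h12 x hx1 hx2
      · have hne : x ≠ y := fun e => hv₁n2 (e ▸ hy2)
        refine ⟨⟨hne, Or.inr ⟨⟨(hA1u x (hm₁ x hv₁).2).mpr (Or.inl rfl),
          (hA1u y (hm₂ y hy2).2).mpr (Or.inr hy2)⟩, hA1₁₂ x y hv₁ hy2⟩⟩,
          (hm₁ x hv₁).2, (hm₂ y hy2).2⟩
      · have hne : x ≠ y := fun e => hv₁n2 (e ▸ hx2)
        refine ⟨⟨hne, Or.inr ⟨⟨(hA1u x (hm₂ x hx2).2).mpr (Or.inr hx2),
          (hA1u y (hm₁ y hv₁).2).mpr (Or.inl rfl)⟩,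
          fun h => hA1₁₂ y x hv₁ hx2 ((G.LC v₂).symm h)⟩⟩,
          (hm₂ x hx2).2, (hm₁ y hv₁).2⟩
  have hA3v₂ : ∀ x, ((((G.LC v₂).LC u).ZM u)).Adj v₂ x ↔ x = v₁ := by
    intro x
    rw [hA3]
    constructor
    · rintro (⟨h, -, -⟩ | ⟨e, -⟩ | ⟨e, -⟩)
      · exact absurd h hv₂n1
      · exact absurd e (Ne.symm hv₁v₂)
      · exact e
    · rintro rfl
      exact Or.inr (Or.inr ⟨rfl, hv₂⟩)
  refine ⟨rfl, fun a b => ?_⟩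
  show (a ≠ b ∧ Xor' (((((G.LC v₂).LC u).ZM u)).Adj a b)
      ((((( G.LC v₂).LC u).ZM u)).Adj v₂ a ∧ ((((G.LC v₂).LC u).ZM u)).Adj v₂ b)) ↔ _
  constructor
  · rintro ⟨hab, ⟨h, -⟩ | ⟨⟨ha, hb⟩, -⟩⟩
    · exact (hA3 a b).mp h
    · exact absurd (((hA3v₂ a).mp ha).trans ((hA3v₂ b).mp hb).symm) hab
  · intro h
    have hab : a ≠ b := by
      rcases h with ⟨-, -, hxy⟩ | ⟨rfl, hb2⟩ | ⟨rfl, ha2⟩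
      · exact hAne hxy
      · exact fun e => hv₁n2 (e ▸ hb2)
      · exact fun e => hv₁n2 (e ▸ ha2)
    refine ⟨hab, Or.inl ⟨(hA3 a b).mpr h, ?_⟩⟩
    rintro ⟨ha, hb⟩
    exact hab (((hA3v₂ a).mp ha).trans ((hA3v₂ b).mp hb).symm)
end

section
/- Let G be a finite simple graph with vertex set V, let u ∈ V have exactly two neighbours v_1 and v_2, and suppose V ∖ {u} is partitioned into sets V_1 ∋ v_1 and V_2 ∋ v_2 with no edge of G joining a vertex of V_1 to a vertex of V_2. Suppose the subgraph of G induced on V_1 is a star graph with centre v_1 having m vertices, and the subgraph of G induced on V_2 is a star graph with centre v_2 having n vertices (m, n ≥ 1). Then the X measurement X_u(G), taken with chosen neighbour v_2, is a star graph on m + n vertices with centre v_1 (vertex set V_1 ∪ V_2, with v_1 adjacent to every other vertex and no other edges). -/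
/-- merging two star graphs by an X measurement at a degree-two
vertex `u` produces a star graph on `m + n` vertices with centre `v₁`. -/
theorem xMeasurement_merge_two_stars {α : Type*} (G : FGraph α) (u v₁ v₂ : α)
    (V₁ V₂ : Set α) (m n : ℕ)
    (hu : u ∈ G.verts)
    (huv₁ : G.Adj u v₁) (huv₂ : G.Adj u v₂) (hv₁v₂ : v₁ ≠ v₂)
    (honly : ∀ x, G.Adj u x → x = v₁ ∨ x = v₂)
    (hpart : V₁ ∪ V₂ = G.verts \ {u})
    (hdisj : Disjoint V₁ V₂)
    (hv₁ : v₁ ∈ V₁) (hv₂ : v₂ ∈ V₂)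
    (hnoedge : ∀ a ∈ V₁, ∀ b ∈ V₂, ¬ G.Adj a b)
    (hstar₁ : ∀ a b, a ∈ V₁ → b ∈ V₁ → (G.Adj a b ↔ (a ≠ b ∧ (a = v₁ ∨ b = v₁))))
    (hstar₂ : ∀ a b, a ∈ V₂ → b ∈ V₂ → (G.Adj a b ↔ (a ≠ b ∧ (a = v₂ ∨ b = v₂))))
    (hfin₁ : V₁.Finite) (hfin₂ : V₂.Finite)
    (hm : V₁.ncard = m) (hn : V₂.ncard = n) (hm1 : 1 ≤ m) (hn1 : 1 ≤ n) :
    (G.XM u v₂).verts = V₁ ∪ V₂ ∧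
    (G.XM u v₂).verts.ncard = m + n ∧
    (G.XM u v₂).IsStar v₁ := by

  classical
  have hune1 : u ≠ v₁ := fun h => G.loopless u (h ▸ huv₁)
  have hune2 : u ≠ v₂ := fun h => G.loopless u (h ▸ huv₂)
  have huV1 : u ∉ V₁ := fun h => (hpart ▸ Set.mem_union_left V₂ h).2 rfl
  have huV2 : u ∉ V₂ := fun h => (hpart ▸ Set.mem_union_right V₁ h).2 rfl
  have hv1V2 : v₁ ∉ V₂ := fun h => (Set.disjoint_left.mp hdisj hv₁) h
  have hv2V1 : v₂ ∉ V₁ := fun h => (Set.disjoint_left.mp hdisj h) hv₂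
  have hmemV : ∀ x, x ∈ V₁ ∪ V₂ → x ∈ G.verts ∧ x ≠ u := by
    intro x hx
    have := hpart ▸ hx
    exact ⟨this.1, this.2⟩
  -- characterization of G's adjacency at u and at v₂
  have hGu : ∀ x, G.Adj u x ↔ (x = v₁ ∨ x = v₂) := by
    intro x
    constructor
    · exact honly x
    · rintro (rfl | rfl)
      · exact huv₁
      · exact huv₂
  have hGv2 : ∀ x, G.Adj v₂ x ↔ (x = u ∨ (x ∈ V₂ ∧ x ≠ v₂)) := by
    intro x
    constructor
    · intro h
      have hxv : x ∈ G.verts := (G.edge_mem h).2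
      by_cases hxu : x = u
      · exact Or.inl hxu
      · have hx : x ∈ V₁ ∪ V₂ := by rw [hpart]; exact ⟨hxv, hxu⟩
        rcases hx with hx | hx
        · exact absurd (G.symm h) (hnoedge x hx v₂ hv₂)
        · refine Or.inr ⟨hx, ?_⟩
          intro he; exact G.loopless v₂ (he ▸ h)
    · rintro (rfl | ⟨hx, hne⟩)
      · exact G.symm huv₂
      · exact (hstar₂ v₂ x hv₂ hx).mpr ⟨fun h => hne h.symm, Or.inl rfl⟩
  -- full characterization of G's adjacency away from u
  have hGchar : ∀ a b, a ≠ u → b ≠ u → (G.Adj a b ↔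
      ((a ∈ V₁ ∧ b ∈ V₁ ∧ a ≠ b ∧ (a = v₁ ∨ b = v₁)) ∨
       (a ∈ V₂ ∧ b ∈ V₂ ∧ a ≠ b ∧ (a = v₂ ∨ b = v₂)))) := by
    intro a b hau hbu
    constructor
    · intro h
      have ha : a ∈ V₁ ∪ V₂ := by rw [hpart]; exact ⟨(G.edge_mem h).1, hau⟩
      have hb : b ∈ V₁ ∪ V₂ := by rw [hpart]; exact ⟨(G.edge_mem h).2, hbu⟩
      rcases ha with ha | ha <;> rcases hb with hb | hb
      · exact Or.inl ⟨ha, hb, ((hstar₁ a b ha hb).mp h).1, ((hstar₁ a b ha hb).mp h).2⟩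
      · exact absurd h (hnoedge a ha b hb)
      · exact absurd (G.symm h) (hnoedge b hb a ha)
      · exact Or.inr ⟨ha, hb, ((hstar₂ a b ha hb).mp h).1, ((hstar₂ a b ha hb).mp h).2⟩
    · rintro (⟨ha, hb, hne, hc⟩ | ⟨ha, hb, hne, hc⟩)
      · exact (hstar₁ a b ha hb).mpr ⟨hne, hc⟩
      · exact (hstar₂ a b ha hb).mpr ⟨hne, hc⟩
  -- G1 = G.LC v₂ : neighbourhood of u
  have hG1u : ∀ x, (G.LC v₂).Adj u x ↔ (x = v₁ ∨ x ∈ V₂) := by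
    intro x
    show (u ≠ x ∧ Xor' (G.Adj u x) (G.Adj v₂ u ∧ G.Adj v₂ x)) ↔ _
    have h1 := hGu x
    have h2 := hGv2 x
    have h3 : G.Adj v₂ u := G.symm huv₂
    have hv2V2 : v₂ ∈ V₂ := hv₂
    constructor
    · rintro ⟨hne, hx⟩
      rcases hx with ⟨hadj, hnb⟩ | ⟨⟨_, hb⟩, hnadj⟩
      · rcases h1.mp hadj with rfl | rfl
        · exact Or.inl rfl
        · exact Or.inr hv2V2
      · rcases h2.mp hb with rfl | ⟨hb2, _⟩
        · exact absurd rfl hne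
        · exact Or.inr hb2
    · rintro (rfl | hx)
      · refine ⟨hune1, Or.inl ⟨huv₁, ?_⟩⟩
        rintro ⟨_, hb⟩
        rcases h2.mp hb with h | h
        · exact hune1 h.symm
        · exact hv1V2 h.1
      · have hxu : x ≠ u := fun h => huV2 (h ▸ hx)
        by_cases hxv2 : x = v₂
        · subst hxv2
          refine ⟨hune2, Or.inl ⟨huv₂, ?_⟩⟩
          rintro ⟨_, hb⟩
          rcases h2.mp hb with h | h
          · exact hune2 h.symm
          · exact h.2 rfl
        · refine ⟨fun h => hxu h.symm, Or.inr ⟨⟨h3, h2.mpr (Or.inr ⟨hx, hxv2⟩)⟩, ?_⟩⟩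
          intro hadj
          rcases h1.mp hadj with rfl | rfl
          · exact hv1V2 hx
          · exact hxv2 rfl
  -- G3 = ((G.LC v₂).LC u).ZM u : star on V₁ ∪ V₂ centred at v₁
  have hG3 : ∀ a b, ((((G.LC v₂).LC u).ZM u).Adj a b ↔
      (a ≠ b ∧ a ∈ V₁ ∪ V₂ ∧ b ∈ V₁ ∪ V₂ ∧ (a = v₁ ∨ b = v₁))) := by
    intro a b
    show ((a ≠ b ∧ Xor' ((G.LC v₂).Adj a b) ((G.LC v₂).Adj u a ∧ (G.LC v₂).Adj u b))
        ∧ a ≠ u ∧ b ≠ u) ↔ _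
    constructor
    · rintro ⟨⟨hab, hx⟩, hau, hbu⟩
      refine ⟨hab, ?_⟩
      have h1a := hG1u a
      have h1b := hG1u b
      have hGab := hGchar a b hau hbu
      have hG2a := hGv2 a
      have hG2b := hGv2 b
      rcases hx with ⟨⟨_, h⟩, hn⟩ | ⟨⟨ha, hb⟩, hn⟩
      · -- adjacent in G.LC v₂, but not both neighbours of u in G.LC v₂
        rcases h with ⟨hadj, hnb⟩ | ⟨⟨hca, hcb⟩, hnadj⟩
        · -- adjacent in G
          rcases hGab.mp hadj with ⟨ha, hb, _, hc⟩ | ⟨ha, hb, _, hc⟩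
          · exact ⟨Or.inl ha, Or.inl hb, hc⟩
          · -- both in V₂, one is v₂: but then both are LC-v₂-neighbours of u, contra
            exact absurd ⟨h1a.mpr (Or.inr ha), h1b.mpr (Or.inr hb)⟩ hn
        · -- both G-neighbours of v₂ : both in V₂ (≠ u), so both LC-neighbours of u, contra
          rcases hG2a.mp hca with rfl | ⟨ha2, _⟩
          · exact absurd rfl hau
          rcases hG2b.mp hcb with rfl | ⟨hb2, _⟩
          · exact absurd rfl hbu
          exact absurd ⟨h1a.mpr (Or.inr ha2), h1b.mpr (Or.inr hb2)⟩ hn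
      · -- both LC-v₂-neighbours of u, not adjacent in G.LC v₂
        rcases h1a.mp ha with rfl | haV2 <;> rcases h1b.mp hb with rfl | hbV2
        · exact absurd rfl hab
        · exact ⟨Or.inl hv₁, Or.inr hbV2, Or.inl rfl⟩
        · exact ⟨Or.inr haV2, Or.inl hv₁, Or.inr rfl⟩
        · -- both in V₂ and non-adjacent in G.LC v₂ : contradiction
          exfalso
          apply hn
          refine ⟨hab, ?_⟩
          by_cases hadj : G.Adj a b
          · refine Or.inl ⟨hadj, ?_⟩
            rintro ⟨hca, hcb⟩
            rcases hGchar a b hau hbu |>.mp hadj with ⟨_, _, _, hc⟩ | ⟨_, _, _, hc⟩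
            · rcases hc with rfl | rfl
              · exact hv1V2 haV2
              · exact hv1V2 hbV2
            · rcases hc with rfl | rfl
              · rcases hG2a.mp hca with h | h
                · exact hau h
                · exact h.2 rfl
              · rcases hG2b.mp hcb with h | h
                · exact hbu h
                · exact h.2 rfl
          · refine Or.inr ⟨⟨?_, ?_⟩, hadj⟩
            · by_cases hav2 : a = v₂
              · exfalso
                apply hadj
                exact (hstar₂ a b haV2 hbV2).mpr ⟨hab, Or.inl hav2⟩
              · exact hG2a.mpr (Or.inr ⟨haV2, hav2⟩)
            · by_cases hbv2 : b = v₂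
              · exfalso
                apply hadj
                exact (hstar₂ a b haV2 hbV2).mpr ⟨hab, Or.inr hbv2⟩
              · exact hG2b.mpr (Or.inr ⟨hbV2, hbv2⟩)
    · rintro ⟨hab, ha, hb, hc⟩
      have hau : a ≠ u := (hmemV a ha).2
      have hbu : b ≠ u := (hmemV b hb).2
      refine ⟨⟨hab, ?_⟩, hau, hbu⟩
      have h1a := hG1u a
      have h1b := hG1u b
      have hG2a := hGv2 a
      have hG2b := hGv2 b
      -- wlog-style: handle a = v₁ and b = v₁ cases
      rcases hc with rfl | rfl
      · -- a = v₁, b ∈ V₁ ∪ V₂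
        rcases hb with hbV1 | hbV2
        · -- b in V₁ : original edge a-b survives both LCs
          have hadj : G.Adj a b := (hstar₁ a b hv₁ hbV1).mpr ⟨hab, Or.inl rfl⟩
          refine Or.inl ⟨⟨hab, Or.inl ⟨hadj, ?_⟩⟩, ?_⟩
          · rintro ⟨hca, _⟩
            rcases hG2a.mp hca with h | h
            · exact hau h
            · exact hv1V2 h.1
          · rintro ⟨_, hcb⟩
            rcases h1b.mp hcb with h | h
            · exact hab h.symm
            · exact (Set.disjoint_left.mp hdisj hbV1) h
        · -- b ∈ V₂ : edge created by LC at u (both neighbours of u in G.LC v₂, not adj there)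
          refine Or.inr ⟨⟨h1a.mpr (Or.inl rfl), h1b.mpr (Or.inr hbV2)⟩, ?_⟩
          rintro ⟨_, h⟩
          rcases h with ⟨hadj, _⟩ | ⟨⟨hca, _⟩, _⟩
          · rcases hGchar a b hau hbu |>.mp hadj with ⟨_, hbb, _, _⟩ | ⟨haa, _, _, _⟩
            · exact (Set.disjoint_left.mp hdisj hbb) hbV2
            · exact hv1V2 haa
          · rcases hG2a.mp hca with h | h
            · exact hau h
            · exact hv1V2 h.1
      · -- b = v₁, symmetric
        rcases ha with haV1 | haV2
        · have hadj : G.Adj a b := (hstar₁ a b haV1 hv₁).mpr ⟨hab, Or.inr rfl⟩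
          refine Or.inl ⟨⟨hab, Or.inl ⟨hadj, ?_⟩⟩, ?_⟩
          · rintro ⟨_, hcb⟩
            rcases hG2b.mp hcb with h | h
            · exact hbu h
            · exact hv1V2 h.1
          · rintro ⟨hca, _⟩
            rcases h1a.mp hca with h | h
            · exact hab h
            · exact (Set.disjoint_left.mp hdisj haV1) h
        · refine Or.inr ⟨⟨h1a.mpr (Or.inr haV2), h1b.mpr (Or.inl rfl)⟩, ?_⟩
          rintro ⟨_, h⟩
          rcases h with ⟨hadj, _⟩ | ⟨⟨_, hcb⟩, _⟩
          · rcases hGchar a b hau hbu |>.mp hadj with ⟨haa, _, _, _⟩ | ⟨_, hbb, _, _⟩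
            · exact (Set.disjoint_left.mp hdisj haa) haV2
            · exact hv1V2 hbb
          · rcases hG2b.mp hcb with h | h
            · exact hbu h
            · exact hv1V2 h.1
  -- vertex set of XM
  have hverts : (G.XM u v₂).verts = V₁ ∪ V₂ := by
    show ((G.verts \ {u})) = V₁ ∪ V₂
    exact hpart.symm
  -- G4 adjacency equals G3 adjacency (LC at v₂ whose only neighbour is v₁)
  have hG4 : ∀ a b, ((G.XM u v₂).Adj a b ↔
      (a ≠ b ∧ a ∈ V₁ ∪ V₂ ∧ b ∈ V₁ ∪ V₂ ∧ (a = v₁ ∨ b = v₁))) := by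
    intro a b
    show (a ≠ b ∧ Xor' ((((G.LC v₂).LC u).ZM u).Adj a b)
        (((((G.LC v₂).LC u).ZM u)).Adj v₂ a ∧ ((((G.LC v₂).LC u).ZM u)).Adj v₂ b)) ↔ _
    have h3v2 : ∀ x, ((((G.LC v₂).LC u).ZM u)).Adj v₂ x → x = v₁ := by
      intro x hx
      rcases (hG3 v₂ x).mp hx with ⟨_, _, _, rfl | rfl⟩
      · exact absurd rfl hv₁v₂.symm
      · rfl
    constructor
    · rintro ⟨hab, hx⟩
      rcases hx with ⟨h, _⟩ | ⟨⟨hca, hcb⟩, _⟩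
      · exact (hG3 a b).mp h
      · exact absurd ((h3v2 a hca).trans (h3v2 b hcb).symm) hab
    · rintro ⟨hab, ha, hb, hc⟩
      refine ⟨hab, Or.inl ⟨(hG3 a b).mpr ⟨hab, ha, hb, hc⟩, ?_⟩⟩
      rintro ⟨hca, hcb⟩
      exact hab ((h3v2 a hca).trans (h3v2 b hcb).symm)
  refine ⟨hverts, ?_, ?_⟩
  · rw [hverts, Set.ncard_union_eq hdisj hfin₁ hfin₂, hm, hn]
  · refine ⟨hverts ▸ Set.mem_union_left V₂ hv₁, ?_⟩
    intro a b
    rw [hG4 a b, hverts]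
end

section
/- Let G be a finite simple graph and suppose some repeater tree T, having exactly N vertices labelled g, is a vertex-minor of G (with T regarded as a simple graph). Then the star graph on N vertices is a vertex-minor of G. -/
/-- A repeater tree: a finite rooted tree (given by a parent map together with a
depth function) whose vertices are labelled `g` (`glabel = true`) or `h`
(`glabel = false`), such that the root and all leaves are labelled `g`, every
`h`-vertex has exactly one child, and along every root-to-leaf path the labels
read `g, h, g, h, …, g, g` (i.e. every non-leaf vertex is labelled `g` exactly
when its depth is even, and every leaf is labelled `g` and lies at odd depth). -/
structure RepeaterTree (α : Type*) where
  verts : Set α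
  root : α
  parent : α → α
  depth : α → ℕ
  glabel : α → Bool
  root_mem : root ∈ verts
  finite : verts.Finite
  parent_mem : ∀ v ∈ verts, parent v ∈ verts
  parent_root : parent root = root
  reaches : ∀ v ∈ verts, ∃ n, parent^[n] v = root
  depth_root : depth root = 0
  depth_parent : ∀ v ∈ verts, v ≠ root → depth v = depth (parent v) + 1
  leaf_g : ∀ v ∈ verts, (∀ w ∈ verts, w ≠ root → parent w ≠ v) →
    glabel v = true ∧ Odd (depth v)
  nonleaf_label : ∀ v ∈ verts, (∃ w, w ∈ verts ∧ w ≠ root ∧ parent w = v) →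
    (glabel v = true ↔ Even (depth v))
  h_one_child : ∀ v ∈ verts, glabel v = false →
    ∃! w, w ∈ verts ∧ w ≠ root ∧ parent w = v

/-- The simple graph underlying a repeater tree: each non-root vertex is joined
to its parent. -/
def RepeaterTree.toFGraph {α : Type*} (T : RepeaterTree α) : FGraph α where
  verts := T.verts
  Adj a b := a ∈ T.verts ∧ b ∈ T.verts ∧ a ≠ b ∧ (T.parent a = b ∨ T.parent b = a)
  symm := fun h => ⟨h.2.1, h.1, h.2.2.1.symm, h.2.2.2.symm⟩
  loopless := fun a h => h.2.2.1 rfl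
  edge_mem := fun h => ⟨h.1, h.2.1⟩

/-!
An `h`-vertex `u` of a repeater tree has a `g`-parent `p` and a single child `c`, and if `u` has
maximal depth then all children of `c` are leaves. Locally complementing at `c`, then at `u`, and
deleting `u` removes `u` and hangs `c` together with all children of `c` directly on `p`. This is
the X-measurement of `u`; its final local complementation, at the now pendant vertex `c`, is
trivial. The result is again a tree of the same shape with one `h`-vertex fewer. Once no
`h`-vertex is left, every vertex is a child of the root, so the tree is the star on the
`g`-vertices.
-/

namespace FGraph

variable {α : Type*}

protected theorem ext {G H : FGraph α} (hv : G.verts = H.verts)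
    (hadj : ∀ a b, G.Adj a b ↔ H.Adj a b) : G = H := by
  obtain ⟨V, A, _, _, _⟩ := G
  obtain ⟨V', A', _, _, _⟩ := H
  obtain rfl : V = V' := hv
  obtain rfl : A = A' := funext₂ fun a b => propext (hadj a b)
  rfl

theorem IsVertexMinor.trans {H K G : FGraph α} (hHK : IsVertexMinor H K)
    (hKG : IsVertexMinor K G) : IsVertexMinor H G :=
  Relation.ReflTransGen.trans hKG hHK

theorem isVertexMinor_lc_lc_zm (G : FGraph α) (u c : α) :
    IsVertexMinor (((G.LC c).LC u).ZM u) G :=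
  .tail (.tail (.single (.lc G c)) (.lc _ u)) (.del _ u)

variable (G : FGraph α)

theorem adj_comm {a b : α} : G.Adj a b ↔ G.Adj b a := ⟨G.symm, G.symm⟩

theorem adj_lc_lc_zm {u c : α} (huc : G.Adj u c) (a b : α) :
    (((G.LC c).LC u).ZM u).Adj a b ↔ a ≠ u ∧ b ≠ u ∧ a ≠ b ∧
      Xor (Xor (G.Adj a b) (G.Adj c a ∧ G.Adj c b))
        (Xor (G.Adj u a) (G.Adj c a) ∧ Xor (G.Adj u b) (G.Adj c b)) := by
  have hcu : G.Adj c u := G.symm huc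
  by_cases hau : a = u; · simp [ZM, hau]
  by_cases hbu : b = u; · simp [ZM, hbu]
  by_cases hab : a = b; · simp [ZM, LC, hab]
  simp only [ZM, LC, ne_eq, hcu, hab, hau, hbu, Ne.symm hau, Ne.symm hbu, not_false_eq_true,
    true_and, and_true, and_self]
  exact Iff.rfl

theorem adj_lc_lc_zm_of_neighbors_eq {u c p : α} (hpc : p ≠ c) (hnpc : ¬ G.Adj p c)
    (hu : ∀ x, G.Adj u x ↔ x = p ∨ x = c)
    (hcommon : ∀ x, G.Adj p x → G.Adj c x → x = u) (a b : α) :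
    (((G.LC c).LC u).ZM u).Adj a b ↔ a ≠ u ∧ b ≠ u ∧ a ≠ b ∧
      ((G.Adj a b ∧ a ≠ c ∧ b ≠ c) ∨ (a = p ∧ b = c) ∨ (a = c ∧ b = p) ∨
        (a = p ∧ G.Adj c b) ∨ (b = p ∧ G.Adj c a)) := by
  rw [G.adj_lc_lc_zm ((hu c).2 (Or.inr rfl)), hu, hu]
  refine and_congr_right fun ha => and_congr_right fun hb => and_congr_right fun hab => ?_
  have hcc := G.loopless c
  have hside : ∀ x, x ≠ u → (Xor (x = p ∨ x = c) (G.Adj c x) ↔ x = p ∨ x = c ∨ G.Adj c x) := by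
    intro x hx
    by_cases hxp : x = p
    · subst hxp; simp [xor_def, hnpc, G.adj_comm (a := c)]
    by_cases hxc : x = c
    · subst hxc; simp [xor_def, hcc]
    simp [xor_def, hxp, hxc]
  rw [hside a ha, hside b hb]
  have hpa : G.Adj c a → ¬ G.Adj p a := fun h h' => ha (hcommon a h' h)
  have hpb : G.Adj c b → ¬ G.Adj p b := fun h h' => hb (hcommon b h' h)
  by_cases hap : a = p <;> by_cases hac : a = c <;> by_cases hbp : b = p <;> by_cases hbc : b = c <;>
    simp_all [xor_def, G.adj_comm] <;> tauto

end FGraph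

/-- `hverts` are the `h`-vertices. Of the label pattern `g, h, …, h, g, g` along root-to-leaf
paths only the consequences in the last three fields are kept: they are all the contraction step
needs, and they are easy to re-establish after it. -/
structure WeakRepeaterTree (α : Type*) where
  verts : Set α
  hverts : Set α
  root : α
  parent : α → α
  depth : α → ℕ
  root_mem : root ∈ verts
  parent_mem : ∀ v ∈ verts, parent v ∈ verts
  parent_root : parent root = root
  depth_parent : ∀ v ∈ verts, v ≠ root → depth v = depth (parent v) + 1
  parent_notMem_hverts : ∀ v ∈ hverts, parent v ∉ hverts
  existsUnique_child : ∀ v ∈ hverts, ∃! w, w ∈ verts ∧ parent w = v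
  parent_ne_of_parent_notMem : ∀ v ∈ verts, v ∉ hverts → v ≠ root → parent v ∉ hverts →
    ∀ w ∈ verts, parent w ≠ v

namespace WeakRepeaterTree

variable {α : Type*} (D : WeakRepeaterTree α)

def graph : FGraph α where
  verts := D.verts
  Adj a b := a ∈ D.verts ∧ b ∈ D.verts ∧ a ≠ b ∧ (D.parent a = b ∨ D.parent b = a)
  symm h := ⟨h.2.1, h.1, h.2.2.1.symm, h.2.2.2.symm⟩
  loopless _ h := h.2.2.1 rfl
  edge_mem h := ⟨h.1, h.2.1⟩

theorem root_notMem_hverts : D.root ∉ D.hverts := fun h =>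
  D.parent_notMem_hverts _ h (by rwa [D.parent_root])

theorem ne_root_of_mem_hverts {u : α} (hu : u ∈ D.hverts) : u ≠ D.root :=
  fun h => D.root_notMem_hverts (h ▸ hu)

theorem parent_ne_self {v : α} (hv : v ∈ D.verts) (hvr : v ≠ D.root) : D.parent v ≠ v := by
  intro hpv
  have := D.depth_parent v hv hvr
  rw [hpv] at this
  omega

theorem parent_eq_root_of_hverts_eq_empty (hU : D.hverts = ∅) {v : α} (hv : v ∈ D.verts) :
    D.parent v = D.root := by
  by_contra hpr
  exact D.parent_ne_of_parent_notMem _ (D.parent_mem v hv) (by simp [hU]) hpr (by simp [hU])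
    v hv rfl

theorem graph_isStar_of_hverts_eq_empty (hU : D.hverts = ∅) : D.graph.IsStar D.root := by
  refine ⟨D.root_mem, fun a b => ⟨?_, ?_⟩⟩
  · rintro ⟨ha, hb, hab, hpar⟩
    refine ⟨hab, ha, hb, ?_⟩
    by_contra! h
    rcases hpar with rfl | rfl
    · exact h.2 (D.parent_eq_root_of_hverts_eq_empty hU ha)
    · exact h.1 (D.parent_eq_root_of_hverts_eq_empty hU hb)
  · rintro ⟨hab, ha, hb, rfl | rfl⟩
    · exact ⟨ha, hb, hab, .inr (D.parent_eq_root_of_hverts_eq_empty hU hb)⟩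
    · exact ⟨ha, hb, hab, .inl (D.parent_eq_root_of_hverts_eq_empty hU ha)⟩

open Classical in
/-- Contracting the `h`-vertex `u` with child `c` re-hangs `c` and the children of `c` (the
"moved" vertices of the lemma names below) on the parent of `u`. -/
noncomputable def contractParent (u c v : α) : α :=
  if v = c ∨ D.parent v = c then D.parent u else D.parent v

open Classical in
noncomputable def contractDepth (u c v : α) : ℕ :=
  if v = c ∨ D.parent v = c then D.depth (D.parent u) + 1 else D.depth v

variable {D} {u c v : α}

theorem mem_verts_of_mem_hverts (hv : v ∈ D.hverts) : v ∈ D.verts := by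
  obtain ⟨w, ⟨hw, hwv⟩, -⟩ := D.existsUnique_child v hv
  exact hwv ▸ D.parent_mem w hw

theorem contractParent_of_moved (hv : v = c ∨ D.parent v = c) :
    D.contractParent u c v = D.parent u := if_pos hv

theorem contractParent_of_not_moved (hv : ¬(v = c ∨ D.parent v = c)) :
    D.contractParent u c v = D.parent v := if_neg hv

theorem contractDepth_of_moved (hv : v = c ∨ D.parent v = c) :
    D.contractDepth u c v = D.depth (D.parent u) + 1 := if_pos hv

theorem contractDepth_of_not_moved (hv : ¬(v = c ∨ D.parent v = c)) :
    D.contractDepth u c v = D.depth v := if_neg hv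

theorem contractParent_eq_iff {w : α} : D.contractParent u c v = w ↔
    (D.parent v = w ∧ v ≠ c ∧ w ≠ c) ∨ (v = c ∧ w = D.parent u) ∨
      (D.parent v = c ∧ w = D.parent u) := by
  unfold contractParent
  split_ifs with hv <;> grind

structure IsLowestHVertex (D : WeakRepeaterTree α) (u c : α) : Prop where
  mem_hverts : u ∈ D.hverts
  child_mem : c ∈ D.verts
  parent_child : D.parent c = u
  grandchild_notMem : ∀ x ∈ D.verts, D.parent x = c → x ∉ D.hverts

namespace IsLowestHVertex

variable (h : D.IsLowestHVertex u c)
include h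

theorem mem_verts : u ∈ D.verts := h.parent_child ▸ D.parent_mem c h.child_mem

theorem parent_mem : D.parent u ∈ D.verts := D.parent_mem u h.mem_verts

theorem parent_notMem : D.parent u ∉ D.hverts := D.parent_notMem_hverts u h.mem_hverts

theorem child_notMem : c ∉ D.hverts := fun hc =>
  D.parent_notMem_hverts c hc (h.parent_child ▸ h.mem_hverts)

theorem ne_root : u ≠ D.root := D.ne_root_of_mem_hverts h.mem_hverts

theorem child_ne_root : c ≠ D.root := fun hc =>
  h.ne_root (by rw [← h.parent_child, hc, D.parent_root])

theorem eq_child {x : α} (hx : x ∈ D.verts) (hxu : D.parent x = u) : x = c :=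
  (D.existsUnique_child u h.mem_hverts).unique ⟨hx, hxu⟩ ⟨h.child_mem, h.parent_child⟩

theorem depth_child : D.depth c = D.depth (D.parent u) + 2 := by
  rw [D.depth_parent c h.child_mem h.child_ne_root, h.parent_child,
    D.depth_parent u h.mem_verts h.ne_root]

theorem parent_ne_child : D.parent u ≠ c := fun hpc => by
  have := h.depth_child
  rw [hpc] at this
  omega

theorem grandparent_ne_child : D.parent (D.parent u) ≠ c := by
  intro hpc
  by_cases hpr : D.parent u = D.root
  · rw [hpr, D.parent_root] at hpc
    exact h.child_ne_root hpc.symm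
  · have := D.depth_parent _ h.parent_mem hpr
    rw [hpc, h.depth_child] at this
    omega

theorem parent_ne_grandchild {x : α} (hx : x ∈ D.verts) (hxc : D.parent x = c) :
    ∀ w ∈ D.verts, D.parent w ≠ x := by
  refine D.parent_ne_of_parent_notMem x hx (h.grandchild_notMem x hx hxc) ?_
    (hxc ▸ h.child_notMem)
  rintro rfl
  exact h.child_ne_root (by rw [← hxc, D.parent_root])

theorem parent_ne : D.parent u ≠ u := D.parent_ne_self h.mem_verts h.ne_root

theorem child_ne : c ≠ u := fun hcu => h.parent_ne (by rw [← hcu, h.parent_child, hcu])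

theorem graph_adj_iff {x : α} : D.graph.Adj u x ↔ x = D.parent u ∨ x = c := by
  constructor
  · rintro ⟨-, hx, -, hux | hxu⟩
    exacts [.inl hux.symm, .inr (h.eq_child hx hxu)]
  · rintro (rfl | rfl)
    · exact ⟨h.mem_verts, h.parent_mem, h.parent_ne.symm, .inl rfl⟩
    · exact ⟨h.mem_verts, h.child_mem, h.child_ne.symm, .inr h.parent_child⟩

theorem graph_not_adj : ¬ D.graph.Adj (D.parent u) c := by
  rintro ⟨-, -, -, hpc | hcp⟩
  · exact h.grandparent_ne_child hpc
  · exact h.parent_ne (h.parent_child ▸ hcp).symm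

theorem eq_of_graph_adj_of_graph_adj {x : α} (hpx : D.graph.Adj (D.parent u) x)
    (hcx : D.graph.Adj c x) : x = u := by
  obtain ⟨-, hx, -, hcx | hxc⟩ := hcx
  · rw [← hcx, h.parent_child]
  obtain ⟨-, -, -, hpx | hxp⟩ := hpx
  · exact absurd hpx (h.parent_ne_grandchild hx hxc _ h.parent_mem)
  · exact absurd (hxc.symm.trans hxp) h.parent_ne_child.symm

theorem parent_not_moved : ¬(D.parent u = c ∨ D.parent (D.parent u) = c) := by
  simp [h.parent_ne_child, h.grandparent_ne_child]

theorem root_not_moved : ¬(D.root = c ∨ D.parent D.root = c) := by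
  simp [D.parent_root, h.child_ne_root.symm]

theorem parent_not_moved_of_not_moved (hv : v ∈ D.verts)
    (hvm : ¬(v = c ∨ D.parent v = c)) :
    ¬(D.parent v = c ∨ D.parent (D.parent v) = c) := by
  rintro (hpv | hppv)
  · exact hvm (.inr hpv)
  · exact h.parent_ne_grandchild (D.parent_mem v hv) hppv v hv rfl

theorem not_moved_of_mem_hverts (hv : v ∈ D.hverts) : ¬(v = c ∨ D.parent v = c) := by
  rintro (rfl | hvc)
  · exact h.child_notMem hv
  · exact h.grandchild_notMem v (mem_verts_of_mem_hverts hv) hvc hv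

theorem moved_of_parent_eq (hv : v ∈ D.verts) (hvu : D.parent v = u) :
    v = c ∨ D.parent v = c :=
  .inl (h.eq_child hv hvu)

theorem contract_root_mem : D.root ∈ D.verts \ {u} := ⟨D.root_mem, h.ne_root.symm⟩

theorem contract_parent_mem (hv : v ∈ D.verts \ {u}) :
    D.contractParent u c v ∈ D.verts \ {u} := by
  by_cases hvm : v = c ∨ D.parent v = c
  · rw [contractParent_of_moved hvm]
    exact ⟨h.parent_mem, h.parent_ne⟩
  · rw [contractParent_of_not_moved hvm]
    exact ⟨D.parent_mem v hv.1, fun hvu => hvm (h.moved_of_parent_eq hv.1 hvu)⟩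

theorem contract_parent_root : D.contractParent u c D.root = D.root := by
  rw [contractParent_of_not_moved h.root_not_moved, D.parent_root]

theorem contract_depth_parent (hv : v ∈ D.verts \ {u}) (hvr : v ≠ D.root) :
    D.contractDepth u c v = D.contractDepth u c (D.contractParent u c v) + 1 := by
  by_cases hvm : v = c ∨ D.parent v = c
  · rw [contractParent_of_moved hvm, contractDepth_of_moved hvm,
      contractDepth_of_not_moved h.parent_not_moved]
  · rw [contractParent_of_not_moved hvm, contractDepth_of_not_moved hvm,
      contractDepth_of_not_moved (h.parent_not_moved_of_not_moved hv.1 hvm),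
      D.depth_parent v hv.1 hvr]

theorem contract_parent_notMem_hverts (hv : v ∈ D.hverts \ {u}) :
    D.contractParent u c v ∉ D.hverts \ {u} := by
  rw [contractParent_of_not_moved (h.not_moved_of_mem_hverts hv.1)]
  exact fun hp => D.parent_notMem_hverts v hv.1 hp.1

theorem contract_existsUnique_child (hv : v ∈ D.hverts \ {u}) :
    ∃! w, w ∈ D.verts \ {u} ∧ D.contractParent u c w = v := by
  obtain ⟨w, ⟨hw, hwv⟩, hw_unique⟩ := D.existsUnique_child v hv.1
  have hwm : ¬(w = c ∨ D.parent w = c) := by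
    rintro (rfl | hwc)
    · exact hv.2 (hwv.symm.trans h.parent_child)
    · exact h.child_notMem (hwc ▸ hwv ▸ hv.1)
  refine ⟨w, ⟨⟨hw, ?_⟩, by rwa [contractParent_of_not_moved hwm]⟩, ?_⟩
  · rintro rfl
    exact h.parent_notMem (hwv ▸ hv.1)
  · rintro x ⟨hx, hxv⟩
    by_cases hxm : x = c ∨ D.parent x = c
    · rw [contractParent_of_moved hxm] at hxv
      exact absurd (hxv ▸ hv.1) h.parent_notMem
    · rw [contractParent_of_not_moved hxm] at hxv
      exact hw_unique x ⟨hx.1, hxv⟩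

theorem contract_parent_ne_of_parent_notMem (hv : v ∈ D.verts \ {u})
    (hvU : v ∉ D.hverts \ {u}) (hvr : v ≠ D.root)
    (hpv : D.contractParent u c v ∉ D.hverts \ {u}) :
    ∀ w ∈ D.verts \ {u}, D.contractParent u c w ≠ v := by
  have hvU' : v ∉ D.hverts := fun hv' => hvU ⟨hv', hv.2⟩
  intro w hw hwv
  by_cases hvm : v = c ∨ D.parent v = c
  · by_cases hwm : w = c ∨ D.parent w = c
    · rw [contractParent_of_moved hwm] at hwv
      exact h.parent_not_moved (hwv ▸ hvm)
    · rw [contractParent_of_not_moved hwm] at hwv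
      rcases hvm with rfl | hvc
      · exact hwm (.inr hwv)
      · exact h.parent_ne_grandchild hv.1 hvc w hw.1 hwv
  · rw [contractParent_of_not_moved hvm] at hpv
    have hpv' : D.parent v ∉ D.hverts := fun hp =>
      hpv ⟨hp, fun hpu => hvm (h.moved_of_parent_eq hv.1 hpu)⟩
    have hleaf := D.parent_ne_of_parent_notMem v hv.1 hvU' hvr hpv'
    by_cases hwm : w = c ∨ D.parent w = c
    · rw [contractParent_of_moved hwm] at hwv
      exact hleaf u h.mem_verts hwv
    · rw [contractParent_of_not_moved hwm] at hwv
      exact hleaf w hw.1 hwv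

noncomputable def contract : WeakRepeaterTree α where
  verts := D.verts \ {u}
  hverts := D.hverts \ {u}
  root := D.root
  parent := D.contractParent u c
  depth := D.contractDepth u c
  root_mem := h.contract_root_mem
  parent_mem _ := h.contract_parent_mem
  parent_root := h.contract_parent_root
  depth_parent _ := h.contract_depth_parent
  parent_notMem_hverts _ := h.contract_parent_notMem_hverts
  existsUnique_child _ := h.contract_existsUnique_child
  parent_ne_of_parent_notMem _ := h.contract_parent_ne_of_parent_notMem

theorem graph_adj_child_iff {x : α} (hxu : x ≠ u) :
    D.graph.Adj c x ↔ x ∈ D.verts ∧ D.parent x = c := by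
  constructor
  · rintro ⟨-, hx, -, hcx | hxc⟩
    exacts [absurd (hcx.symm.trans h.parent_child) hxu, ⟨hx, hxc⟩]
  · rintro ⟨hx, hxc⟩
    refine ⟨h.child_mem, hx, ?_, .inr hxc⟩
    rintro rfl
    exact h.child_ne (hxc.symm.trans h.parent_child)

theorem contract_graph : h.contract.graph = ((D.graph.LC c).LC u).ZM u := by
  refine FGraph.ext rfl fun a b => ?_
  rw [FGraph.adj_lc_lc_zm_of_neighbors_eq _ h.parent_ne_child h.graph_not_adj
    (fun _ => h.graph_adj_iff) (fun _ => h.eq_of_graph_adj_of_graph_adj)]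
  by_cases hau : a = u; · simp [graph, contract, hau]
  by_cases hbu : b = u; · simp [graph, contract, hbu]
  rw [h.graph_adj_child_iff hau, h.graph_adj_child_iff hbu]
  simp only [contract, graph, Set.mem_sdiff, Set.mem_singleton_iff, contractParent_eq_iff]
  have := h.parent_mem
  have := h.child_mem
  grind

end IsLowestHVertex

theorem exists_isLowestHVertex (hu : u ∈ D.hverts)
    (hmax : ∀ v ∈ D.hverts, D.depth v ≤ D.depth u) : ∃ c, D.IsLowestHVertex u c := by
  obtain ⟨c, ⟨hc, hcu⟩, -⟩ := D.existsUnique_child u hu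
  refine ⟨c, hu, hc, hcu, fun x hx hxc hxU => ?_⟩
  have hcr : c ≠ D.root := fun hcr =>
    D.ne_root_of_mem_hverts hu (by rw [← hcu, hcr, D.parent_root])
  have hdc := D.depth_parent c hc hcr
  have hdx := D.depth_parent x hx (D.ne_root_of_mem_hverts hxU)
  have := hmax x hxU
  rw [hcu] at hdc
  rw [hxc] at hdx
  omega

variable (D) in
theorem exists_isStar_isVertexMinor (hfin : D.hverts.Finite) :
    ∃ H : FGraph α, FGraph.IsVertexMinor H D.graph ∧ H.IsStar D.root ∧
      H.verts = D.verts \ D.hverts := by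
  obtain ⟨n, hn⟩ : ∃ n, D.hverts.ncard = n := ⟨_, rfl⟩
  induction n generalizing D with
  | zero =>
    have hU : D.hverts = ∅ := (Set.ncard_eq_zero hfin).1 hn
    exact ⟨D.graph, .refl, D.graph_isStar_of_hverts_eq_empty hU, by simp [graph, hU]⟩
  | succ n ih =>
    obtain ⟨u, hu, hmax⟩ := Set.exists_max_image D.hverts D.depth hfin
      (Set.nonempty_of_ncard_ne_zero (by omega))
    obtain ⟨c, h⟩ := exists_isLowestHVertex hu hmax
    obtain ⟨H, hH, hstar, hverts⟩ := ih h.contract hfin.sdiff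
      (by simp [IsLowestHVertex.contract, Set.ncard_sdiff_singleton_of_mem hu, hn])
    refine ⟨H, hH.trans ?_, hstar, ?_⟩
    · rw [h.contract_graph]
      exact FGraph.isVertexMinor_lc_lc_zm _ _ _
    · rw [hverts]
      ext v
      simp only [IsLowestHVertex.contract, Set.mem_sdiff, Set.mem_singleton_iff]
      grind

end WeakRepeaterTree

namespace RepeaterTree

variable {α : Type*} (T : RepeaterTree α)

theorem glabel_root : T.glabel T.root = true := by
  by_cases hex : ∃ w, w ∈ T.verts ∧ w ≠ T.root ∧ T.parent w = T.root
  · exact (T.nonleaf_label T.root T.root_mem hex).2 (by rw [T.depth_root]; exact Even.zero)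
  · exact (T.leaf_g T.root T.root_mem (fun w hw hwr hp => hex ⟨w, hw, hwr, hp⟩)).1

theorem glabel_parent_iff_even {w : α} (hw : w ∈ T.verts) (hwr : w ≠ T.root) :
    T.glabel (T.parent w) = true ↔ Even (T.depth (T.parent w)) :=
  T.nonleaf_label _ (T.parent_mem w hw) ⟨w, hw, hwr, rfl⟩

theorem glabel_parent_of_glabel_eq_false {v : α} (hv : v ∈ T.verts) (hg : T.glabel v = false) :
    T.glabel (T.parent v) = true := by
  obtain ⟨w, ⟨hw, hwr, rfl⟩, -⟩ := T.h_one_child v hv hg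
  have hvr : T.parent w ≠ T.root := fun hvr => by simp [hvr, T.glabel_root] at hg
  have hodd : ¬ Even (T.depth (T.parent w)) := by
    simpa [hg] using T.glabel_parent_iff_even hw hwr
  rw [T.glabel_parent_iff_even hv hvr]
  rw [T.depth_parent _ hv hvr, Nat.even_add_one] at hodd
  exact not_not.1 hodd

theorem parent_ne_of_glabel_parent {v : α} (hv : v ∈ T.verts) (hg : T.glabel v = true)
    (hvr : v ≠ T.root) (hpg : T.glabel (T.parent v) = true) : ∀ w ∈ T.verts, T.parent w ≠ v := by
  rintro w hw rfl
  have hwr : w ≠ T.root := fun hwr => hvr (by rw [hwr, T.parent_root])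
  have heven := (T.glabel_parent_iff_even hw hwr).1 hg
  have hpeven := (T.glabel_parent_iff_even hv hvr).1 hpg
  rw [T.depth_parent _ hv hvr, Nat.even_add_one] at heven
  exact heven hpeven

def toWeak : WeakRepeaterTree α where
  verts := T.verts
  hverts := {v ∈ T.verts | T.glabel v = false}
  root := T.root
  parent := T.parent
  depth := T.depth
  root_mem := T.root_mem
  parent_mem := T.parent_mem
  parent_root := T.parent_root
  depth_parent := T.depth_parent
  parent_notMem_hverts v hv hpv := by
    simp [T.glabel_parent_of_glabel_eq_false hv.1 hv.2] at hpv
  existsUnique_child v hv := by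
    obtain ⟨w, hw, hw_unique⟩ := T.h_one_child v hv.1 hv.2
    refine ⟨w, ⟨hw.1, hw.2.2⟩, fun x hx => hw_unique x ⟨hx.1, ?_, hx.2⟩⟩
    rintro rfl
    simp [← hx.2, T.parent_root, T.glabel_root] at hv
  parent_ne_of_parent_notMem v hv hvU hvr hpU :=
    T.parent_ne_of_glabel_parent hv (by simpa [hv] using hvU) hvr
      (by simpa [T.parent_mem v hv] using hpU)

end RepeaterTree

/-- if a repeater tree with exactly `N` vertices labelled `g` is a
vertex-minor of `G`, then a star graph on `N` vertices is a vertex-minor of `G`. -/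
theorem star_vertexMinor_of_repeaterTree {α : Type*} (G : FGraph α)
    (T : RepeaterTree α) (N : ℕ)
    (hN : {v ∈ T.verts | T.glabel v = true}.ncard = N)
    (hminor : FGraph.IsVertexMinor T.toFGraph G) :
    ∃ (H : FGraph α) (c : α),
      FGraph.IsVertexMinor H G ∧ H.IsStar c ∧ H.verts.ncard = N := by
  obtain ⟨H, hH, hstar, hverts⟩ :=
    T.toWeak.exists_isStar_isVertexMinor (T.finite.subset (Set.sep_subset _ _))
  refine ⟨H, T.root, hH.trans hminor, hstar, ?_⟩
  rw [hverts, ← hN]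
  congr 1
  ext v
  simp [RepeaterTree.toWeak]
end

section
/- Let n ≥ 3 and let S be a star graph on a vertex set V of n vertices. Then every graph obtained from S by a finite sequence of local complementations (at arbitrary vertices) is either a star graph on V (with some centre) or the complete graph on V. -/
namespace FGraphAux

open FGraph

variable {α : Type*}

lemma star_lc_ne {G : FGraph α} {c v : α} (h : G.IsStar c) (hv : v ≠ c) :
    (G.LC v).IsStar c := by
  obtain ⟨hc, hadj⟩ := h
  have key : ∀ a b : α, a ≠ b → ¬(G.Adj v a ∧ G.Adj v b) := by
    rintro a b hab ⟨h1, h2⟩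
    rw [hadj] at h1 h2
    rcases h1.2.2.2 with h | h
    · exact hv h
    rcases h2.2.2.2 with h' | h'
    · exact hv h'
    exact hab (h.trans h'.symm)
  refine ⟨hc, fun a b => ?_⟩
  show (a ≠ b ∧ Xor' (G.Adj a b) (G.Adj v a ∧ G.Adj v b)) ↔
    a ≠ b ∧ a ∈ G.verts ∧ b ∈ G.verts ∧ (a = c ∨ b = c)
  constructor
  · rintro ⟨hab, hx⟩
    rcases hx with ⟨h1, _⟩ | ⟨h1, _⟩
    · exact (hadj a b).mp h1
    · exact absurd h1 (key a b hab)
  · intro h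
    exact ⟨h.1, Or.inl ⟨(hadj a b).mpr h, key a b h.1⟩⟩

lemma star_lc_center {G : FGraph α} {c : α} (h : G.IsStar c) :
    (G.LC c).IsComplete := by
  obtain ⟨hc, hadj⟩ := h
  intro a b
  show (a ≠ b ∧ Xor' (G.Adj a b) (G.Adj c a ∧ G.Adj c b)) ↔
    a ≠ b ∧ a ∈ G.verts ∧ b ∈ G.verts
  have ha := hadj a b
  have h1 := hadj c a
  have h2 := hadj c b
  simp only [Xor'] at *
  constructor
  · rintro ⟨hab, ⟨hx, _⟩ | ⟨⟨hx, hy⟩, _⟩⟩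
    · have := ha.mp hx; exact ⟨hab, this.2.1, this.2.2.1⟩
    · exact ⟨hab, (h1.mp hx).2.2.1, (h2.mp hy).2.2.1⟩
  · rintro ⟨hab, haV, hbV⟩
    refine ⟨hab, ?_⟩
    by_cases hx : a = c ∨ b = c
    · refine Or.inl ⟨ha.mpr ⟨hab, haV, hbV, hx⟩, ?_⟩
      rintro ⟨u1, u2⟩
      have := (h1.mp u1).1
      have := (h2.mp u2).1
      rcases hx with rfl | rfl <;> simp_all
    · push_neg at hx
      refine Or.inr ⟨⟨h1.mpr ⟨fun e => hx.1 e.symm, hc, haV, Or.inl (by trivial)⟩,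
        h2.mpr ⟨fun e => hx.2 e.symm, hc, hbV, Or.inl (by trivial)⟩⟩, fun e => ?_⟩
      have := (ha.mp e).2.2.2
      tauto

lemma complete_lc_mem {G : FGraph α} (h : G.IsComplete) {v : α} (hv : v ∈ G.verts) :
    (G.LC v).IsStar v := by
  refine ⟨hv, fun a b => ?_⟩
  show (a ≠ b ∧ Xor' (G.Adj a b) (G.Adj v a ∧ G.Adj v b)) ↔
    a ≠ b ∧ a ∈ G.verts ∧ b ∈ G.verts ∧ (a = v ∨ b = v)
  have ha := h a b
  have h1 := h v a
  have h2 := h v b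
  simp only [Xor'] at *
  constructor
  · rintro ⟨hab, ⟨hx, hy⟩ | ⟨⟨hx, hy⟩, _⟩⟩
    · have hx' := ha.mp hx
      refine ⟨hab, hx'.2.1, hx'.2.2, ?_⟩
      by_contra hcon
      push_neg at hcon
      exact hy ⟨h1.mpr ⟨fun e => hcon.1 e.symm, hv, hx'.2.1⟩,
        h2.mpr ⟨fun e => hcon.2 e.symm, hv, hx'.2.2⟩⟩
    · have := (h1.mp hx).1
      have := (h2.mp hy).1
      simp_all
  · rintro ⟨hab, haV, hbV, hx⟩
    refine ⟨hab, Or.inl ⟨ha.mpr ⟨hab, haV, hbV⟩, ?_⟩⟩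
    rintro ⟨u1, u2⟩
    have := (h1.mp u1).1
    have := (h2.mp u2).1
    rcases hx with rfl | rfl <;> simp_all
  
lemma complete_lc_not_mem {G : FGraph α} (h : G.IsComplete) {v : α} (hv : v ∉ G.verts) :
    (G.LC v).IsComplete := by
  intro a b
  show (a ≠ b ∧ Xor' (G.Adj a b) (G.Adj v a ∧ G.Adj v b)) ↔
    a ≠ b ∧ a ∈ G.verts ∧ b ∈ G.verts
  have ha := h a b
  have h1 := h v a
  simp only [Xor'] at *
  constructor
  · rintro ⟨hab, ⟨hx, _⟩ | ⟨⟨hx, _⟩, _⟩⟩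
    · exact ha.mp hx
    · exact absurd (h1.mp hx).2.1 hv
  · intro hx
    exact ⟨hx.1, Or.inl ⟨ha.mpr hx, fun e => hv (h1.mp e.1).2.1⟩⟩

end FGraphAux

/-- every graph obtained from a star graph on `n ≥ 3` vertices by
a finite sequence of local complementations is either a star graph on the same
vertex set or the complete graph on that vertex set. -/
theorem lcReach_star {α : Type*} (S : FGraph α) (c : α)
    (hfin : S.verts.Finite) (hcard : 3 ≤ S.verts.ncard)
    (hstar : S.IsStar c) :
    ∀ H, FGraph.LCReach S H →
      H.verts = S.verts ∧ ((∃ c', H.IsStar c') ∨ H.IsComplete) := by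
  intro H hreach
  induction hreach with
  | refl => exact ⟨rfl, Or.inl ⟨c, hstar⟩⟩
  | @tail G H' hSG step ih =>
    obtain ⟨hverts, hcase⟩ := ih
    cases step with
    | lc v =>
      refine ⟨hverts, ?_⟩
      rcases hcase with ⟨c', hs⟩ | hcomp
      · by_cases hvc : v = c'
        · subst hvc; exact Or.inr (FGraphAux.star_lc_center hs)
        · exact Or.inl ⟨c', FGraphAux.star_lc_ne hs hvc⟩
      · by_cases hvm : v ∈ G.verts
        · exact Or.inl ⟨v, FGraphAux.complete_lc_mem hcomp hvm⟩
        · exact Or.inr (FGraphAux.complete_lc_not_mem hcomp hvm)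
end

section
/- For every l ≥ 4, there is no finite sequence of local complementations that transforms the cycle graph C_l into a star graph on its l vertices. -/
/-- The cycle graph on vertices `0, 1, …, l-1`, with `i` adjacent to `j`
iff `i - j ≡ ±1 (mod l)`. -/
def cycleGraph (l : ℕ) : FGraph ℕ where
  verts := {i | i < l}
  Adj a b := a < l ∧ b < l ∧ a ≠ b ∧ ((a + 1) % l = b ∨ (b + 1) % l = a)
  symm := fun h => ⟨h.2.1, h.1, h.2.2.1.symm, h.2.2.2.symm⟩
  loopless := fun a h => h.2.2.1 rfl
  edge_mem := fun h => ⟨h.1, h.2.1⟩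

/-!
Over GF(2), local complementation at `v` adds `A v a * A v b` to every off-diagonal entry
`A a b` of the adjacency matrix. On a block whose rows and columns are disjoint this adds
multiples of the column of `v` to the columns (or, when `v` indexes a row, of the row of `v` to
the rows), so the cut-rank of every vertex cut is invariant. In `C_l` with `l ≥ 4` the rows
`0, 1` and columns `l - 1, 2` form an identity block, whereas every cut of a star has
cut-rank at most one.
-/

namespace FGraph

variable {α : Type*} (G : FGraph α)

open Classical in
noncomputable def adjEntry (a b : α) : ZMod 2 :=
  if G.Adj a b then 1 else 0

lemma adjEntry_comm (a b : α) : G.adjEntry a b = G.adjEntry b a := by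
  unfold adjEntry
  by_cases hab : G.Adj a b
  · simp [hab, G.symm hab]
  · simp [hab, mt G.symm hab]

@[simp]
lemma adjEntry_self (a : α) : G.adjEntry a a = 0 := by
  simp [adjEntry, G.loopless]

lemma adjEntry_LC {a b : α} (hab : a ≠ b) (v : α) :
    (G.LC v).adjEntry a b = G.adjEntry a b + G.adjEntry v a * G.adjEntry v b := by
  unfold adjEntry LC
  by_cases hab' : G.Adj a b <;> by_cases hva : G.Adj v a <;> by_cases hvb : G.Adj v b <;>
    simp [hab', hva, hvb, hab, Xor', CharTwo.add_self_eq_zero]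

lemma adjEntry_LC_self (v b : α) : (G.LC v).adjEntry v b = G.adjEntry v b := by
  rcases eq_or_ne v b with rfl | hvb
  · simp
  · simp [adjEntry_LC G hvb]

lemma adjEntry_mul_adjEntry_eq_of_iff {a b c d a' b' c' d' : α}
    (h : G.Adj a b ∧ G.Adj c d ↔ G.Adj a' b' ∧ G.Adj c' d') :
    G.adjEntry a b * G.adjEntry c d = G.adjEntry a' b' * G.adjEntry c' d' := by
  unfold adjEntry
  split_ifs <;> simp_all

noncomputable def crossDet (a b x y : α) : ZMod 2 :=
  G.adjEntry a x * G.adjEntry b y - G.adjEntry a y * G.adjEntry b x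

lemma crossDet_transpose (a b x y : α) : G.crossDet x y a b = G.crossDet a b x y := by
  simp only [crossDet, G.adjEntry_comm x, G.adjEntry_comm y]
  ring

/-- Off the diagonal, `LC_v` adds `A v x` times column `v` to column `x`, so the minor on
columns `x, y` changes by multiples of the minors on columns `x, v` and `v, y`. -/
lemma crossDet_eq_crossDet_LC {a b x y : α} (hax : a ≠ x) (hay : a ≠ y) (hbx : b ≠ x)
    (hby : b ≠ y) (v : α) :
    G.crossDet a b x y = (G.LC v).crossDet a b x y
      - G.adjEntry v y * (G.LC v).crossDet a b x v
      - G.adjEntry v x * (G.LC v).crossDet a b v y := by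
  simp only [crossDet, G.adjEntry_LC hax, G.adjEntry_LC hay, G.adjEntry_LC hbx,
    G.adjEntry_LC hby, (G.LC v).adjEntry_comm _ v, adjEntry_LC_self]
  ring

/-- Equivalently, some vertex cut of `G` has cut-rank at least two. -/
def HasRankTwoCut : Prop :=
  ∃ a b x y, a ≠ x ∧ a ≠ y ∧ b ≠ x ∧ b ≠ y ∧ G.crossDet a b x y ≠ 0

lemma hasRankTwoCut_LC_of_ne {a b x y : α} (hax : a ≠ x) (hay : a ≠ y) (hbx : b ≠ x)
    (hby : b ≠ y) (hdet : G.crossDet a b x y ≠ 0) {v : α} (hva : v ≠ a) (hvb : v ≠ b) :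
    (G.LC v).HasRankTwoCut := by
  by_contra hnone
  simp only [HasRankTwoCut, not_exists, not_and, not_not] at hnone
  apply hdet
  rw [G.crossDet_eq_crossDet_LC hax hay hbx hby v, hnone a b x y hax hay hbx hby,
    hnone a b x v hax hva.symm hbx hvb.symm, hnone a b v y hva.symm hay hvb.symm hby]
  ring

lemma HasRankTwoCut.LC {G : FGraph α} (hG : G.HasRankTwoCut) (v : α) :
    (G.LC v).HasRankTwoCut := by
  obtain ⟨a, b, x, y, hax, hay, hbx, hby, hdet⟩ := hG
  by_cases hv : v = a ∨ v = b
  · have hvx : v ≠ x := by rintro rfl; rcases hv with rfl | rfl <;> contradiction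
    have hvy : v ≠ y := by rintro rfl; rcases hv with rfl | rfl <;> contradiction
    rw [← crossDet_transpose] at hdet
    exact G.hasRankTwoCut_LC_of_ne hax.symm hbx.symm hay.symm hby.symm hdet hvx hvy
  · obtain ⟨hva, hvb⟩ := not_or.mp hv
    exact G.hasRankTwoCut_LC_of_ne hax hay hbx hby hdet hva hvb

lemma LCReach.hasRankTwoCut {G H : FGraph α} (hGH : G.LCReach H) (hG : G.HasRankTwoCut) :
    H.HasRankTwoCut := by
  induction hGH with
  | refl => exact hG
  | tail _ hstep ih =>
    cases hstep with
    | lc v => exact ih.LC v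

lemma IsStar.not_hasRankTwoCut {G : FGraph α} {c : α} (hG : G.IsStar c) :
    ¬ G.HasRankTwoCut := by
  rintro ⟨a, b, x, y, hax, hay, hbx, hby, hdet⟩
  apply hdet
  rw [crossDet, sub_eq_zero]
  apply adjEntry_mul_adjEntry_eq_of_iff
  simp only [hG.2]
  grind

end FGraph

lemma cycleGraph_hasRankTwoCut {l : ℕ} (hl : 4 ≤ l) : (cycleGraph l).HasRankTwoCut := by
  have hwrap : (l - 1 + 1) % l = 0 := by rw [Nat.sub_add_cancel (by omega), Nat.mod_self]
  have h_0_last : (cycleGraph l).Adj 0 (l - 1) := ⟨by omega, by omega, by omega, Or.inr hwrap⟩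
  have h_1_2 : (cycleGraph l).Adj 1 2 :=
    ⟨by omega, by omega, by omega, Or.inl (Nat.mod_eq_of_lt (by omega))⟩
  have h_0_2 : ¬ (cycleGraph l).Adj 0 2 := by
    rintro ⟨-, -, -, h | h⟩ <;> rw [Nat.mod_eq_of_lt (by omega)] at h <;> omega
  have h_1_last : ¬ (cycleGraph l).Adj 1 (l - 1) := by
    rintro ⟨-, -, -, h | h⟩
    · rw [Nat.mod_eq_of_lt (by omega)] at h
      omega
    · rw [hwrap] at h
      exact zero_ne_one h
  refine ⟨0, 1, l - 1, 2, by omega, by omega, by omega, by omega, ?_⟩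
  simp [FGraph.crossDet, FGraph.adjEntry, h_0_last, h_1_2, h_0_2, h_1_last]

/-- for `l ≥ 4`, no finite sequence of local complementations
transforms the cycle `C_l` into a star graph. -/
theorem cycle_not_lcReach_star (l : ℕ) (hl : 4 ≤ l) :
    ∀ H, FGraph.LCReach (cycleGraph l) H → ∀ c, ¬ H.IsStar c := by
  intro H hreach c hstar
  exact hstar.not_hasRankTwoCut (hreach.hasRankTwoCut (cycleGraph_hasRankTwoCut hl))
end
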